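/- The function H̃ satisfies lim_{q → 0⁺} H̃(q) = 1. -/

import Mathlib

open Filter Set

/-- `w` is the root of `q (z^3 - z) + 1 = 0` with `Im w ≥ 0`, `Re w > 0` having the
smallest real part among all such roots. -/
def IsQtilde (q : ℝ) (w : ℂ) : Prop :=
  (q : ℂ) * (w ^ 3 - w) + 1 = 0 ∧ 0 ≤ w.im ∧ 0 < w.re ∧
    ∀ z : ℂ, (q : ℂ) * (z ^ 3 - z) + 1 = 0 → 0 ≤ z.im → 0 < z.re → w.re ≤ z.re

/-- `H̃(q) = |(q̃ - 1)/(q̃ + 1)| · exp(q · Re(q̃²))` where `q̃` is the distinguished root. -/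
noncomputable def Htilde (q : ℝ) : ℝ :=
  ‖(Classical.epsilon (IsQtilde q) - 1) / (Classical.epsilon (IsQtilde q) + 1)‖ *
    Real.exp (q * ((Classical.epsilon (IsQtilde q)) ^ 2).re)

/-! For `0 < q ≤ 1/6` the cubic has a real root `r ≤ -2`; the other two roots
`-r/2 ± i √(3r² - 4)/2` share the positive real part `-r/2`, so `q̃` exists. Every root `u`
satisfies `u³ - u = -1/q`, hence `u → ∞` as `q → 0⁺`, and `q u² = -(u - u⁻¹)⁻¹ → 0`.
So both `|(u - 1)/(u + 1)|` and `exp (q Re u²)` tend to `1`. -/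

open Bornology Topology

lemma exists_real_root_le_neg_two {q : ℝ} (hq : 0 < q) (hq' : q ≤ 1 / 6) :
    ∃ r ≤ -2, q * (r ^ 3 - r) + 1 = 0 := by
  have hab : -2 / q ≤ -2 := by rw [div_le_iff₀ hq]; linarith
  have hleft : q * ((-2 / q) ^ 3 - -2 / q) + 1 ≤ 0 := by
    have h : q * ((-2 / q) ^ 3 - -2 / q) + 1 = 3 - 8 / q ^ 2 := by field_simp; ring
    rw [h, sub_nonpos, le_div_iff₀ (by positivity)]
    nlinarith
  have hright : 0 ≤ q * ((-2) ^ 3 - -2) + 1 := by linarith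
  obtain ⟨r, hr, hroot⟩ := intermediate_value_Icc hab
    (f := fun r => q * (r ^ 3 - r) + 1) (by fun_prop) ⟨hleft, hright⟩
  exact ⟨r, hr.2, hroot⟩

lemma re_eq_of_sq_add_mul_add_eq_zero {r : ℝ} (hr : 4 < 3 * r ^ 2) {z : ℂ}
    (hz : z ^ 2 + r * z + (r ^ 2 - 1) = 0) : z.re = -r / 2 := by
  have hre := congrArg Complex.re hz
  have him := congrArg Complex.im hz
  simp only [sq, Complex.add_re, Complex.add_im, Complex.mul_re, Complex.mul_im, Complex.sub_re,
    Complex.sub_im, Complex.ofReal_re, Complex.ofReal_im, Complex.one_re, Complex.one_im,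
    Complex.zero_re, Complex.zero_im] at hre him
  have him_ne : z.im ≠ 0 := by
    intro h0
    rw [h0] at hre
    nlinarith [sq_nonneg (2 * z.re + r)]
  have : z.im * (2 * z.re + r) = 0 := by linear_combination him
  have := (mul_eq_zero.1 this).resolve_left him_ne
  linarith

lemma mk_sq_add_mul_add_eq_zero {r s : ℝ} (hs : s ^ 2 = 3 * r ^ 2 - 4) :
    (⟨-r / 2, s / 2⟩ : ℂ) ^ 2 + r * ⟨-r / 2, s / 2⟩ + (r ^ 2 - 1) = 0 := by
  apply Complex.ext <;>
    simp only [sq, Complex.add_re, Complex.add_im, Complex.mul_re, Complex.mul_im, Complex.sub_re,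
      Complex.sub_im, Complex.ofReal_re, Complex.ofReal_im, Complex.one_re, Complex.one_im,
      Complex.zero_re, Complex.zero_im] <;> nlinarith

lemma isQtilde_of_root {q r : ℝ} (hr : r < 0) (hr' : 4 < 3 * r ^ 2)
    (hroot : q * (r ^ 3 - r) + 1 = 0) :
    IsQtilde q ⟨-r / 2, √(3 * r ^ 2 - 4) / 2⟩ := by
  have hrootC : (q : ℂ) * ((r : ℂ) ^ 3 - r) + 1 = 0 := by exact_mod_cast hroot
  have hq : (q : ℂ) ≠ 0 := by rintro h; simp [h] at hrootC
  have hquad := mk_sq_add_mul_add_eq_zero (Real.sq_sqrt (by linarith : 0 ≤ 3 * r ^ 2 - 4))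
  refine ⟨by linear_combination hrootC + (q * (⟨-r / 2, √(3 * r ^ 2 - 4) / 2⟩ - r) : ℂ) * hquad,
    by positivity, by simpa using hr, fun z hz _ hz_re => ?_⟩
  have : (q : ℂ) * (z - r) * (z ^ 2 + r * z + (r ^ 2 - 1)) = 0 := by
    linear_combination hz - hrootC
  rcases mul_eq_zero.1 this with hlin | hquadz
  · have : z = r := sub_eq_zero.1 ((mul_eq_zero.1 hlin).resolve_left hq)
    subst this
    simp at hz_re
    linarith
  · simp [re_eq_of_sq_add_mul_add_eq_zero hr' hquadz]

lemma exists_isQtilde {q : ℝ} (hq : 0 < q) (hq' : q ≤ 1 / 6) : ∃ w, IsQtilde q w := by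
  obtain ⟨r, hr, hroot⟩ := exists_real_root_le_neg_two hq hq'
  exact ⟨_, isQtilde_of_root (by linarith) (by nlinarith) hroot⟩

lemma comap_cobounded_le_of_continuous {α β : Type*} [PseudoMetricSpace α] [ProperSpace α]
    [PseudoMetricSpace β] {f : α → β} (hf : Continuous f) :
    (cobounded β).comap f ≤ cobounded α :=
  comap_cobounded_le_iff.2 fun _ hs =>
    (hs.isCompact_closure.image hf).isBounded.subset (image_mono subset_closure)

lemma tendsto_cobounded_of_root {u : ℝ → ℂ}
    (hu : ∀ᶠ q : ℝ in 𝓝[>] 0, (q : ℂ) * (u q ^ 3 - u q) + 1 = 0) :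
    Tendsto u (𝓝[>] 0) (cobounded ℂ) := by
  have hinv : Tendsto (fun q : ℝ => -((q : ℂ)⁻¹)) (𝓝[>] 0) (cobounded ℂ) := by
    rw [← tendsto_norm_atTop_iff_cobounded]
    refine tendsto_inv_nhdsGT_zero.congr' ?_
    filter_upwards [self_mem_nhdsWithin] with q hq
    simp [abs_of_pos (show 0 < q from hq)]
  have hcubic : Tendsto (fun q => u q ^ 3 - u q) (𝓝[>] 0) (cobounded ℂ) := by
    refine hinv.congr' (hu.mono fun q hq => ?_)
    have hq0 : (q : ℂ) ≠ 0 := by rintro h; simp [h] at hq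
    field_simp
    linear_combination -hq
  exact hcubic.of_tendsto_comp (g := fun z : ℂ => z ^ 3 - z)
    (comap_cobounded_le_of_continuous (by fun_prop))

section NormedField

variable {𝕜 : Type*} [NormedField 𝕜]

lemma tendsto_sub_one_div_add_one_cobounded :
    Tendsto (fun u : 𝕜 => (u - 1) / (u + 1)) (cobounded 𝕜) (𝓝 1) := by
  have h : Tendsto (fun u : 𝕜 => 1 - 2 * (u + 1)⁻¹) (cobounded 𝕜) (𝓝 1) := by
    simpa using ((tendsto_inv₀_cobounded.comp (tendsto_add_const_cobounded 1)).const_mul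
      (2 : 𝕜)).const_sub 1
  refine h.congr' ?_
  filter_upwards [(tendsto_add_const_cobounded (1 : 𝕜)).eventually_ne_cobounded 0] with u hu
  field_simp
  ring

lemma tendsto_inv_sub_inv_cobounded :
    Tendsto (fun u : 𝕜 => (u - u⁻¹)⁻¹) (cobounded 𝕜) (𝓝 0) := by
  have h : Tendsto (fun v : 𝕜 => v * (1 - v ^ 2)⁻¹) (𝓝 0) (𝓝 0) := by
    simpa using (by fun_prop (disch := simp) :
      ContinuousAt (fun v : 𝕜 => v * (1 - v ^ 2)⁻¹) 0).tendsto
  refine (h.comp tendsto_inv₀_cobounded).congr' ?_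
  filter_upwards [eventually_ne_cobounded 0] with u hu
  rw [Function.comp_apply, ← mul_inv, mul_sub, mul_one, sq, ← mul_assoc, mul_inv_cancel₀ hu,
    one_mul]

end NormedField

lemma mul_sq_eq_neg_inv_sub_inv {K : Type*} [Field K] {q u : K} (h : q * (u ^ 3 - u) + 1 = 0) :
    q * u ^ 2 = -(u - u⁻¹)⁻¹ := by
  have hu : u ≠ 0 := by rintro rfl; simp at h
  have hu' : u ^ 2 - 1 ≠ 0 := by
    intro h'
    have : u ^ 3 - u = u * (u ^ 2 - 1) := by ring
    rw [this, h'] at h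
    simp at h
  have : u - u⁻¹ = (u ^ 2 - 1) / u := by field_simp
  rw [this, inv_div]
  field_simp
  linear_combination h

theorem Htilde_tendsto_zero :
    Tendsto Htilde (nhdsWithin 0 (Set.Ioi 0)) (nhds 1) := by
  set u : ℝ → ℂ := fun q => Classical.epsilon (IsQtilde q)
  have hroot : ∀ᶠ q : ℝ in 𝓝[>] 0, (q : ℂ) * (u q ^ 3 - u q) + 1 = 0 := by
    filter_upwards [Ioc_mem_nhdsGT (by norm_num : (0 : ℝ) < 1 / 6)] with q hq
    exact (Classical.epsilon_spec (exists_isQtilde hq.1 hq.2)).1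
  have hlim : Tendsto (fun z : ℂ => ‖(z - 1) / (z + 1)‖ * Real.exp (-((z - z⁻¹)⁻¹).re))
      (cobounded ℂ) (𝓝 1) := by
    have hre : Tendsto (fun z : ℂ => -((z - z⁻¹)⁻¹).re) (cobounded ℂ) (𝓝 0) := by
      simpa using ((Complex.continuous_re.tendsto 0).comp tendsto_inv_sub_inv_cobounded).neg
    simpa using tendsto_sub_one_div_add_one_cobounded.norm.mul
      ((Real.continuous_exp.tendsto 0).comp hre)
  refine (hlim.comp (tendsto_cobounded_of_root hroot)).congr' ?_
  filter_upwards [hroot] with q hq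
  simp [Htilde, u, ← Complex.re_ofReal_mul, mul_sq_eq_neg_inv_sub_inv hq]
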